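/- arXiv:2205.00086 — 8 statements merged into one kernel-verified Lean document; each statement's English description precedes it below -/
import Mathlib

section
/- In a split graph G with vertex partition into a clique C and independent set I, a subset D ⊆ C with |D| ≥ 2 is a minimal connected dominating set of G if and only if D is a minimal hitting set of the set system {N(i) : i ∈ I} over the ground set C, provided every vertex in I has at least one neighbor (all in C). -/
/-- `S` is a connected dominating set of `G`. -/
def IsCDS {V : Type*} (G : SimpleGraph V) (S : Set V) : Prop :=
  (∀ v, v ∈ S ∨ ∃ u ∈ S, G.Adj u v) ∧ (G.induce S).Connected

/-- `S` is an inclusion-minimal connected dominating set of `G`. -/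
def IsMinCDS {V : Type*} (G : SimpleGraph V) (S : Set V) : Prop :=
  IsCDS G S ∧ ∀ T : Set V, T ⊂ S → ¬ IsCDS G T

theorem stmt8 {V : Type*} [Fintype V] (G : SimpleGraph V) (C I : Set V)
    (hpart : C ∪ I = Set.univ) (hdisj : Disjoint C I)
    (hclique : C.Pairwise G.Adj)
    (hind : ∀ ⦃u v : V⦄, u ∈ I → v ∈ I → ¬ G.Adj u v)
    (hNI : ∀ i ∈ I, (∃ u, G.Adj i u) ∧ ∀ u, G.Adj i u → u ∈ C)
    (D : Set V) (hDC : D ⊆ C) (hD2 : 2 ≤ D.ncard) :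
    IsMinCDS G D ↔
      ((∀ i ∈ I, ∃ d ∈ D, G.Adj d i) ∧
        ∀ D' : Set V, D' ⊂ D → ¬ (∀ i ∈ I, ∃ d ∈ D', G.Adj d i)) := by
  -- any nonempty subset of the clique hitting all of I is a CDS
  have key : ∀ S : Set V, S ⊆ C → S.Nonempty →
      (∀ i ∈ I, ∃ d ∈ S, G.Adj d i) → IsCDS G S := by
    rintro S hSC ⟨s, hs⟩ hhit
    constructor
    · intro v
      by_cases hvS : v ∈ S
      · exact Or.inl hvS
      · have hv : v ∈ C ∪ I := hpart ▸ Set.mem_univ v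
        rcases hv with hvC | hvI
        · exact Or.inr ⟨s, hs, hclique (hSC hs) hvC (fun h => hvS (h ▸ hs))⟩
        · obtain ⟨d, hd, hadj⟩ := hhit v hvI
          exact Or.inr ⟨d, hd, hadj⟩
    · rw [SimpleGraph.connected_iff]
      refine ⟨fun a b => ?_, ⟨⟨s, hs⟩⟩⟩
      by_cases hab : (a : V) = b
      · rw [Subtype.ext hab]
      · exact (show (G.induce S).Adj a b from
          hclique (hSC a.2) (hSC b.2) hab).reachable
  have hDne : D.Nonempty := by
    rcases D.eq_empty_or_nonempty with h | h
    · simp [h] at hD2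
    · exact h
  constructor
  · rintro ⟨hCDS, hmin⟩
    constructor
    · intro i hi
      rcases hCDS.1 i with hiD | ⟨u, hu, hadj⟩
      · exact absurd hi (Set.disjoint_left.mp hdisj (hDC hiD))
      · exact ⟨u, hu, hadj⟩
    · intro D' hsub hhit'
      rcases D'.eq_empty_or_nonempty with hE | hne
      · -- then I is empty; a singleton in D is a CDS
        have hIe : ∀ i, i ∉ I := by
          intro i hi
          obtain ⟨d, hd, -⟩ := hhit' i hi
          simp [hE] at hd
        obtain ⟨d, hd⟩ := hDne
        obtain ⟨a, b, ha, hb, hab⟩ := (Set.one_lt_ncard_iff (Set.toFinite D)).mp hD2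
        have hne' : ({d} : Set V) ≠ D := by
          intro h
          have ha' : a ∈ ({d} : Set V) := h.symm ▸ ha
          have hb' : b ∈ ({d} : Set V) := h.symm ▸ hb
          exact hab ((Set.mem_singleton_iff.mp ha').trans
            (Set.mem_singleton_iff.mp hb').symm)
        exact hmin {d} ⟨Set.singleton_subset_iff.mpr hd, fun h => hne' ((Set.singleton_subset_iff.mpr hd).antisymm h)⟩
          (key {d} (by simp [hDC hd]) ⟨d, rfl⟩ (fun i hi => absurd hi (hIe i)))
      · exact hmin D' hsub (key D' (hsub.subset.trans hDC) hne hhit')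
  · rintro ⟨hhit, hmin'⟩
    refine ⟨key D hDC hDne hhit, fun T hT hTCDS => hmin' T hT ?_⟩
    intro i hi
    rcases hTCDS.1 i with hiT | ⟨u, hu, hadj⟩
    · exact absurd hi (Set.disjoint_left.mp hdisj (hDC (hT.subset hiT)))
    · exact ⟨u, hu, hadj⟩
end

section
/- For every integer t ≥ 2, the graph G_t has exactly (t^3 + t^2)/2 − t minimal connected dominating sets that have non-empty intersection with the set X. -/
/-- Vertices of `G_t`: `Sum.inl i` is `x_i`, `Sum.inr (Sum.inl j)` is `y_j`,
and `Sum.inr (Sum.inr ())` is `z`. -/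
abbrev GtV (t : ℕ) := Fin t ⊕ (Fin t ⊕ Unit)

/-- Base relation for `G_t`: `X` is a clique, `x_i ~ y_j` iff `i ≠ j`,
`Y` is independent, and `z` is adjacent exactly to all of `Y`. -/
def GtRel (t : ℕ) : GtV t → GtV t → Prop
  | .inl i, .inl j => i ≠ j
  | .inl i, .inr (.inl j) => i ≠ j
  | .inr (.inl _), .inr (.inr _) => True
  | _, _ => False

/-- The graph `G_t`. -/
def Gt (t : ℕ) : SimpleGraph (GtV t) := SimpleGraph.fromRel (GtRel t)

open SimpleGraph

lemma SimpleGraph.induce_triple_connected_of_adj {V : Type*} {G : SimpleGraph V} {a b c : V}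
    (hab : G.Adj a b) (hbc : G.Adj b c) : (G.induce {a, b, c}).Connected := by
  have h := (Walk.cons hab (Walk.cons hbc Walk.nil)).connected_induce_support
  rwa [show {v | v ∈ (Walk.cons hab (Walk.cons hbc Walk.nil)).support} = {a, b, c} by
    ext; simp] at h

lemma IsCDS.exists_adj_mem {V : Type*} {G : SimpleGraph V} {S : Set V} (hS : IsCDS G S)
    {v w : V} (hw : w ∈ S) (hvw : v ≠ w) : ∃ u ∈ S, G.Adj v u := by
  by_cases hv : v ∈ S
  · obtain ⟨p⟩ := hS.2.preconnected ⟨v, hv⟩ ⟨w, hw⟩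
    cases p with
    | nil => exact absurd rfl hvw
    | cons h _ => exact ⟨_, Subtype.prop _, h⟩
  · obtain ⟨u, hu, huv⟩ := (hS.1 v).resolve_left hv
    exact ⟨u, hu, huv.symm⟩

namespace Gt

variable {t : ℕ}

local notation "X" i => (Sum.inl i : GtV _)
local notation "Y" j => (Sum.inr (Sum.inl j) : GtV _)
local notation "Z" => (Sum.inr (Sum.inr ()) : GtV _)

@[simp] lemma adj_xx {i j : Fin t} : (Gt t).Adj (X i) (X j) ↔ i ≠ j := by
  simp [Gt, GtRel]; tauto
@[simp] lemma adj_xy {i j : Fin t} : (Gt t).Adj (X i) (Y j) ↔ i ≠ j := by simp [Gt, GtRel]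
@[simp] lemma adj_yx {i j : Fin t} : (Gt t).Adj (Y j) (X i) ↔ i ≠ j := by simp [Gt, GtRel]
@[simp] lemma not_adj_yy {i j : Fin t} : ¬ (Gt t).Adj (Y i) (Y j) := by simp [Gt, GtRel]
@[simp] lemma adj_yz {j : Fin t} : (Gt t).Adj (Y j) Z := by simp [Gt, GtRel]
@[simp] lemma adj_zy {j : Fin t} : (Gt t).Adj Z (Y j) := by simp [Gt, GtRel]
@[simp] lemma not_adj_xz {i : Fin t} : ¬ (Gt t).Adj (X i) Z := by simp [Gt, GtRel]
@[simp] lemma not_adj_zx {i : Fin t} : ¬ (Gt t).Adj Z (X i) := by simp [Gt, GtRel]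

lemma isCDS_xxy {i j k : Fin t} (hij : i ≠ j) : IsCDS (Gt t) {X i, X j, Y k} := by
  refine ⟨?_, ?_⟩
  · rintro (m | m | ⟨⟩)
    · by_cases hm : m = i
      · simp [hm]
      · exact Or.inr ⟨X i, by simp, by simpa [eq_comm] using hm⟩
    · by_cases hm : m = i
      · exact Or.inr ⟨X j, by simp, by simpa [hm, eq_comm] using hij⟩
      · exact Or.inr ⟨X i, by simp, by simpa [eq_comm] using hm⟩
    · exact Or.inr ⟨Y k, by simp, adj_yz⟩
  · by_cases hk : k = i
    · subst hk
      exact induce_triple_connected_of_adj (adj_xx.2 hij) (adj_xy.2 hij.symm)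
    · have h := induce_triple_connected_of_adj (G := Gt t) (adj_yx.2 (Ne.symm hk)) (adj_xx.2 hij)
      rwa [Set.insert_comm, Set.pair_comm (Y k)] at h

lemma isCDS_xyz {i j : Fin t} (hij : i ≠ j) : IsCDS (Gt t) {X i, Y j, Z} := by
  refine ⟨?_, induce_triple_connected_of_adj (adj_xy.2 hij) adj_yz⟩
  rintro (m | m | ⟨⟩)
  · by_cases hm : m = i
    · simp [hm]
    · exact Or.inr ⟨X i, by simp, by simpa [eq_comm] using hm⟩
  · exact Or.inr ⟨Z, by simp, adj_zy⟩
  · simp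

def IsBasic (S : Set (GtV t)) : Prop :=
  (∃ i j k, i ≠ j ∧ S = {X i, X j, Y k}) ∨ ∃ i j, i ≠ j ∧ S = {X i, Y j, Z}

variable {S T : Set (GtV t)}

lemma IsBasic.isCDS (hS : IsBasic S) : IsCDS (Gt t) S := by
  obtain ⟨i, j, k, hij, rfl⟩ | ⟨i, j, hij, rfl⟩ := hS
  exacts [isCDS_xxy hij, isCDS_xyz hij]

lemma IsBasic.ncard_eq_three (hS : IsBasic S) : S.ncard = 3 := by
  rw [Set.ncard_eq_three]
  obtain ⟨i, j, k, hij, rfl⟩ | ⟨i, j, hij, rfl⟩ := hS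
  exacts [⟨_, _, _, by simpa, by simp, by simp, rfl⟩, ⟨_, _, _, by simp, by simp, by simp, rfl⟩]

lemma IsBasic.inter_range_inl_nonempty (hS : IsBasic S) : (S ∩ Set.range Sum.inl).Nonempty := by
  obtain ⟨i, j, k, hij, rfl⟩ | ⟨i, j, hij, rfl⟩ := hS <;> exact ⟨X i, by simp⟩

lemma IsBasic.eq_of_y_mem (hS : IsBasic S) {j k : Fin t} (hj : (Y j) ∈ S) (hk : (Y k) ∈ S) :
    j = k := by
  obtain ⟨_, _, l, _, rfl⟩ | ⟨_, l, _, rfl⟩ := hS <;> simp_all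

lemma exists_isBasic_subset_of_isCDS (hS : IsCDS (Gt t) S) {a : Fin t} (ha : (X a) ∈ S) :
    ∃ T, IsBasic T ∧ T ⊆ S := by
  obtain ⟨k, hk⟩ : ∃ k, (Y k) ∈ S := by
    obtain ⟨u, hu, hzu⟩ := hS.exists_adj_mem ha (v := Z) (by simp)
    rcases u with m | m | ⟨⟩
    exacts [absurd hzu not_adj_zx, ⟨m, hu⟩, absurd hzu (Gt t).irrefl]
  by_cases hb : ∃ b ≠ a, (X b) ∈ S
  · obtain ⟨b, hba, hb⟩ := hb
    refine ⟨_, Or.inl ⟨a, b, k, hba.symm, rfl⟩, ?_⟩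
    simp [Set.insert_subset_iff, *]
  replace hb : ∀ b, (X b) ∈ S → b = a := fun b hbS => by_contra fun hba => hb ⟨b, hba, hbS⟩
  obtain ⟨m, hma, hm⟩ : ∃ m, m ≠ a ∧ (Y m) ∈ S := by
    obtain ⟨u, hu, hau⟩ := hS.exists_adj_mem hk (v := X a) (by simp)
    rcases u with m | m | ⟨⟩
    exacts [absurd (hb m hu) (adj_xx.1 hau).symm, ⟨m, (adj_xy.1 hau).symm, hu⟩,
      absurd hau not_adj_xz]
  have hz : Z ∈ S := by
    obtain ⟨u, hu, hau⟩ := hS.exists_adj_mem ha (v := Y a) (by simp)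
    rcases u with m | m | ⟨⟩
    exacts [absurd (hb m hu) (adj_yx.1 hau), absurd hau not_adj_yy, hu]
  exact ⟨_, Or.inr ⟨a, m, hma.symm, rfl⟩, by simp [Set.insert_subset_iff, *]⟩

lemma exists_y_mem_of_isCDS_of_forall_x_notMem (hT : IsCDS (Gt t) T) (hX : ∀ m, (X m) ∉ T)
    (i : Fin t) : ∃ m ≠ i, (Y m) ∈ T := by
  obtain ⟨u, hu, hui⟩ := (hT.1 (X i)).resolve_left (hX i)
  rcases u with m | m | ⟨⟩
  exacts [absurd hu (hX m), ⟨m, (adj_yx.1 hui).symm, hu⟩, absurd hui not_adj_zx]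

lemma inter_range_inl_nonempty_of_isCDS_of_subset (hT : IsCDS (Gt t) T) (hS : IsBasic S)
    (hTS : T ⊆ S) : (T ∩ Set.range Sum.inl).Nonempty := by
  by_contra hX
  replace hX : ∀ m, (X m) ∉ T := fun m hm => hX ⟨X m, hm, m, rfl⟩
  obtain ⟨i, -⟩ : ∃ i, (X i) ∈ S := by
    obtain ⟨i, -, -, -, rfl⟩ | ⟨i, -, -, rfl⟩ := hS <;> exact ⟨i, by simp⟩
  obtain ⟨m, -, hm⟩ := exists_y_mem_of_isCDS_of_forall_x_notMem hT hX i
  obtain ⟨m', hm'm, hm'⟩ := exists_y_mem_of_isCDS_of_forall_x_notMem hT hX m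
  exact hm'm (hS.eq_of_y_mem (hTS hm') (hTS hm))

theorem isMinCDS_and_inter_range_inl_nonempty_iff :
    IsMinCDS (Gt t) S ∧ (S ∩ Set.range Sum.inl).Nonempty ↔ IsBasic S := by
  constructor
  · rintro ⟨⟨hS, hmin⟩, -, hv, a, rfl⟩
    obtain ⟨T, hT, hTS⟩ := exists_isBasic_subset_of_isCDS hS hv
    obtain rfl : T = S := by
      by_contra hne
      exact hmin T (hTS.ssubset_of_ne hne) hT.isCDS
    exact hT
  · intro hS
    refine ⟨⟨hS.isCDS, fun T hTS hT => ?_⟩, hS.inter_range_inl_nonempty⟩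
    obtain ⟨-, hv, a, rfl⟩ := inter_range_inl_nonempty_of_isCDS_of_subset hT hS hTS.subset
    obtain ⟨U, hU, hUT⟩ := exists_isBasic_subset_of_isCDS hT hv
    have hUS : U = S := Set.eq_of_subset_of_ncard_le (hUT.trans hTS.subset)
      (by rw [hU.ncard_eq_three, hS.ncard_eq_three]) S.toFinite
    exact hTS.not_subset (hUS ▸ hUT)

lemma setOf_isBasic_eq :
    {S : Set (GtV t) | IsBasic S} =
      (fun p : (Fin t × Fin t) × Fin t => ({X p.1.1, X p.1.2, Y p.2} : Set (GtV t))) ''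
          ({p | p.1 < p.2} ×ˢ Set.univ) ∪
        (fun p : Fin t × Fin t => ({X p.1, Y p.2, Z} : Set (GtV t))) '' Set.univ.offDiag := by
  ext S
  constructor
  · rintro (⟨i, j, k, hij, rfl⟩ | ⟨i, j, hij, rfl⟩)
    · left
      obtain hij | hji := hij.lt_or_gt
      · exact ⟨((i, j), k), by simpa using hij, rfl⟩
      · exact ⟨((j, i), k), by simpa using hji, Set.insert_comm _ _ _⟩
    · exact Or.inr ⟨(i, j), by simpa using hij, rfl⟩
  · rintro (⟨⟨⟨i, j⟩, k⟩, hij, rfl⟩ | ⟨⟨i, j⟩, hij, rfl⟩)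
    · exact Or.inl ⟨i, j, k, (by simpa using hij : i < j).ne, rfl⟩
    · exact Or.inr ⟨i, j, by simpa using hij, rfl⟩

lemma ncard_setOf_isBasic :
    {S : Set (GtV t) | IsBasic S}.ncard = t.choose 2 * t + (t * t - t) := by
  have hdisj : Disjoint
      ((fun p : (Fin t × Fin t) × Fin t => ({X p.1.1, X p.1.2, Y p.2} : Set (GtV t))) ''
        ({p | p.1 < p.2} ×ˢ Set.univ))
      ((fun p : Fin t × Fin t => ({X p.1, Y p.2, Z} : Set (GtV t))) '' Set.univ.offDiag) := by
    rw [Set.disjoint_left]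
    rintro _ ⟨p, -, rfl⟩ ⟨q, -, hqp⟩
    simpa using Set.ext_iff.1 hqp Z
  have hinj₁ : Set.InjOn
      (fun p : (Fin t × Fin t) × Fin t => ({X p.1.1, X p.1.2, Y p.2} : Set (GtV t)))
      ({p | p.1 < p.2} ×ˢ Set.univ) := by
    rintro ⟨⟨i, j⟩, k⟩ hij ⟨⟨a, b⟩, c⟩ hab h
    have mem := Set.ext_iff.1 h
    have hi := mem (X i); have hj := mem (X j); have ha := mem (X a); have hk := mem (Y k)
    simp only [Set.mem_insert_iff, Set.mem_singleton_iff, Sum.inl.injEq, reduceCtorEq,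
      Sum.inr.injEq, or_false, true_or, or_true, true_iff, iff_true, false_or] at hi hj ha hk
    simp only [Set.mem_prod, Set.mem_ofPred_eq, Set.mem_univ, and_true] at hij hab
    simp only [Prod.mk.injEq]
    omega
  have hinj₂ : Set.InjOn (fun p : Fin t × Fin t => ({X p.1, Y p.2, Z} : Set (GtV t)))
      Set.univ.offDiag := by
    rintro ⟨i, j⟩ - ⟨a, b⟩ - h
    have mem := Set.ext_iff.1 h
    have hi := mem (X i); have hj := mem (Y j)
    simp only [Set.mem_insert_iff, Set.mem_singleton_iff, Sum.inl.injEq, reduceCtorEq,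
      Sum.inr.injEq, or_false, true_iff, false_or] at hi hj
    rw [hi, hj]
  rw [setOf_isBasic_eq, Set.ncard_union_eq hdisj, hinj₁.ncard_image,
    hinj₂.ncard_image, Set.ncard_prod, Set.ncard_univ, Nat.card_eq_fintype_card,
    Fintype.card_fin, Set.ncard_eq_toFinset_card', Set.toFinset_ofPred,
    Fintype.card_product_filter_lt, Fintype.card_fin, ← Finset.coe_univ, ← Finset.coe_offDiag,
    Set.ncard_coe_finset, Finset.offDiag_card, Finset.card_univ, Fintype.card_fin]

end Gt

lemma Nat.choose_two_mul_add_mul_self_sub (t : ℕ) :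
    t.choose 2 * t + (t * t - t) = (t ^ 3 + t ^ 2) / 2 - t := by
  obtain _ | n := t
  · simp
  have h : 2 * (n + 1).choose 2 = (n + 1) * n := by
    rw [Nat.choose_two_right, Nat.add_sub_cancel, mul_comm (n + 1),
      Nat.mul_div_cancel' (Nat.even_mul_succ_self n).two_dvd]
  have : (n + 1) ^ 3 + (n + 1) ^ 2 =
      2 * ((n + 1).choose 2 * (n + 1) + ((n + 1) * (n + 1) - (n + 1)) + (n + 1)) := by
    rw [show (n + 1) * (n + 1) - (n + 1) = (n + 1) * n by rw [Nat.mul_succ, Nat.add_sub_cancel]]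
    linear_combination (n + 1) * h.symm
  omega

theorem stmt9_general (t : ℕ) :
    {S : Set (GtV t) |
        IsMinCDS (Gt t) S ∧ (S ∩ Set.range Sum.inl).Nonempty}.ncard =
      (t ^ 3 + t ^ 2) / 2 - t := by
  simp_rw [Gt.isMinCDS_and_inter_range_inl_nonempty_iff]
  rw [Gt.ncard_setOf_isBasic, Nat.choose_two_mul_add_mul_self_sub]

theorem stmt9 (t : ℕ) (ht : 2 ≤ t) :
    {S : Set (GtV t) |
        IsMinCDS (Gt t) S ∧ (S ∩ Set.range Sum.inl).Nonempty}.ncard =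
      (t ^ 3 + t ^ 2) / 2 - t :=
  stmt9_general t
end

section
/- In the graph G_t (t ≥ 2), no minimal connected dominating set contains more than two vertices of X. -/
lemma adj_xx {t : ℕ} {i j : Fin t} (h : i ≠ j) : (Gt t).Adj (.inl i) (.inl j) :=
  ⟨by simp [h], Or.inl h⟩

lemma adj_xy {t : ℕ} {i j : Fin t} (h : i ≠ j) : (Gt t).Adj (.inl i) (.inr (.inl j)) :=
  ⟨by simp, Or.inl h⟩

lemma adj_xa {t : ℕ} {i : Fin t} {v : GtV t} (h : (Gt t).Adj (.inl i) v) :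
    (∃ j, j ≠ i ∧ v = .inl j) ∨ (∃ j, j ≠ i ∧ v = .inr (.inl j)) := by
  rcases v with j | j | u
  · refine Or.inl ⟨j, ?_, rfl⟩
    simp only [Gt, SimpleGraph.fromRel_adj, GtRel] at h
    exact fun hji => h.2.elim (fun hh => hh hji.symm) (fun hh => hh hji)
  · refine Or.inr ⟨j, ?_, rfl⟩
    simp only [Gt, SimpleGraph.fromRel_adj, GtRel] at h
    exact fun hji => h.2.elim (fun hh => hh hji.symm) (fun hh => hh)
  · simp [Gt, SimpleGraph.fromRel_adj, GtRel] at h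

theorem stmt10 (t : ℕ) (ht : 2 ≤ t) (S : Set (GtV t))
    (hS : IsMinCDS (Gt t) S) : (S ∩ Set.range Sum.inl).ncard ≤ 2 := by
  by_contra hcon
  rw [not_le] at hcon
  rw [Set.two_lt_ncard (Set.toFinite _)] at hcon
  obtain ⟨xa, ⟨haS, a, rfl⟩, xb, ⟨hbS, b, rfl⟩, xc, ⟨hcS, c, rfl⟩, hab, hac, hbc⟩ := hcon
  have hab' : a ≠ b := fun h => hab (by rw [h])
  have hac' : a ≠ c := fun h => hac (by rw [h])
  have hbc' : b ≠ c := fun h => hbc (by rw [h])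
  set G := Gt t
  set T : Set (GtV t) := S \ {Sum.inl a} with hT
  have hbT : Sum.inl b ∈ T := ⟨hbS, by simp [hab'.symm]⟩
  have hcT : Sum.inl c ∈ T := ⟨hcS, by simp [hac'.symm]⟩
  have hTsub : T ⊂ S := ⟨Set.diff_subset, fun hsub => (hsub haS).2 rfl⟩
  refine hS.2 T hTsub ⟨?_, ?_⟩
  · -- domination
    intro v
    by_cases hvT : v ∈ T
    · exact Or.inl hvT
    by_cases hva : v = Sum.inl a
    · exact Or.inr ⟨Sum.inl b, hbT, hva ▸ adj_xx hab'.symm⟩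
    have hvS : v ∉ S := fun h => hvT ⟨h, hva⟩
    rcases hS.1.1 v with h | ⟨u, huS, hu⟩
    · exact absurd h hvS
    by_cases hua : u = Sum.inl a
    · subst hua
      rcases adj_xa hu with ⟨j, hja, rfl⟩ | ⟨j, hja, rfl⟩
      · refine Or.inr ⟨Sum.inl b, hbT, adj_xx ?_⟩
        rintro rfl; exact hvS hbS
      · by_cases hjb : j = b
        · exact Or.inr ⟨Sum.inl c, hcT, adj_xy (by subst hjb; exact hbc'.symm)⟩
        · exact Or.inr ⟨Sum.inl b, hbT, adj_xy (Ne.symm hjb)⟩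
    · exact Or.inr ⟨u, ⟨huS, hua⟩, hu⟩
  · -- connectivity
    have hreach : ∀ v (hv : v ∈ T), G.Adj (Sum.inl a) v →
        (G.induce T).Reachable ⟨Sum.inl b, hbT⟩ ⟨v, hv⟩ := by
      intro v hv hadj
      rcases adj_xa hadj with ⟨j, hja, rfl⟩ | ⟨j, hja, rfl⟩
      · by_cases hjb : j = b
        · subst hjb; exact SimpleGraph.Reachable.refl _
        · exact SimpleGraph.Adj.reachable (by exact adj_xx (Ne.symm hjb))
      · by_cases hjb : j = b
        · subst hjb
          refine (SimpleGraph.Adj.reachable (v := (⟨Sum.inl c, hcT⟩ : T))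
            (by exact adj_xx hbc')).trans
            (SimpleGraph.Adj.reachable (by exact adj_xy hbc'.symm))
        · exact SimpleGraph.Adj.reachable (by exact adj_xy (Ne.symm hjb))
    have hstep : ∀ (p q : ↥S), (G.induce S).Adj p q →
        (G.induce T).Reachable
          (if h : (p : GtV t) = Sum.inl a then ⟨Sum.inl b, hbT⟩ else ⟨p, p.2, h⟩)
          (if h : (q : GtV t) = Sum.inl a then ⟨Sum.inl b, hbT⟩ else ⟨q, q.2, h⟩) := by
      intro p q h
      have h' : G.Adj ↑p ↑q := h
      by_cases hp : (p : GtV t) = Sum.inl a <;> by_cases hq : (q : GtV t) = Sum.inl a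
      · exact absurd (hp.trans hq.symm) h'.ne
      · rw [dif_pos hp, dif_neg hq]
        exact hreach q ⟨q.2, hq⟩ (hp ▸ h')
      · rw [dif_neg hp, dif_pos hq]
        exact (hreach p ⟨p.2, hp⟩ (hq ▸ h'.symm)).symm
      · rw [dif_neg hp, dif_neg hq]
        exact SimpleGraph.Adj.reachable (by exact h')
    have key : ∀ {p q : ↥S} (_ : (G.induce S).Walk p q),
        (G.induce T).Reachable
          (if h : (p : GtV t) = Sum.inl a then ⟨Sum.inl b, hbT⟩ else ⟨p, p.2, h⟩)
          (if h : (q : GtV t) = Sum.inl a then ⟨Sum.inl b, hbT⟩ else ⟨q, q.2, h⟩) := by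
      intro p q w
      induction w with
      | nil => exact SimpleGraph.Reachable.refl _
      | cons h w ih => exact (hstep _ _ h).trans ih
    haveI : Nonempty ↥T := ⟨⟨Sum.inl b, hbT⟩⟩
    refine SimpleGraph.Connected.mk ?_
    intro u v
    obtain ⟨w⟩ := hS.1.2.preconnected ⟨u.1, u.2.1⟩ ⟨v.1, v.2.1⟩
    have hu : (↑u : GtV t) ≠ Sum.inl a := u.2.2
    have hv : (↑v : GtV t) ≠ Sum.inl a := v.2.2
    have := key w
    simp only [dif_neg hu, dif_neg hv] at this
    exact this
end

section
/- In the graph G_t (t ≥ 3), for every pair of distinct vertices x_i, x_j ∈ X and every vertex y_k ∈ Y, the set {x_i, x_j, y_k} is a minimal connected dominating set of G_t. -/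
lemma no_edge_not_reachable {V : Type*} {G : SimpleGraph V} {u v : V} (hne : u ≠ v)
    (h : ∀ w, ¬ G.Adj u w) : ¬ G.Reachable u v := by
  rintro ⟨w⟩
  cases w with
  | nil => exact hne rfl
  | cons h' p => exact h _ h'

lemma connected_of_hub {V : Type*} (G : SimpleGraph V) (S : Set V) (a : V) (ha : a ∈ S)
    (h : ∀ v ∈ S, v = a ∨ G.Adj a v) : (G.induce S).Connected := by
  rw [SimpleGraph.connected_iff]
  refine ⟨fun u v => ?_, ⟨⟨a, ha⟩⟩⟩
  have key : ∀ w : S, (G.induce S).Reachable ⟨a, ha⟩ w := by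
    rintro ⟨w, hw⟩
    rcases h w hw with rfl | hadj
    · exact SimpleGraph.Reachable.refl _
    · exact SimpleGraph.Adj.reachable (by simpa using hadj)
  exact (key u).symm.trans (key v)

/-- No subset of `{x_l, y_m}` is a CDS of `G_t`. -/
lemma not_cds_pair (t : ℕ) (l m : Fin t) (T : Set (GtV t))
    (hT : T ⊆ {Sum.inl l, Sum.inr (Sum.inl m)}) : ¬ IsCDS (Gt t) T := by
  rintro ⟨hdom, hconn⟩
  by_cases hlm : l = m
  · subst hlm
    -- y_l ∈ T via domination of z
    have hz : (Sum.inr (Sum.inl l) : GtV t) ∈ T := by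
      rcases hdom (Sum.inr (Sum.inr ())) with h | ⟨u, huT, hadj⟩
      · exact absurd (hT h) (by simp)
      · rcases hT huT with h | h <;> simp_all [Gt, GtRel]
    by_cases hx : (Sum.inl l : GtV t) ∈ T
    · -- induced graph on T has no edges but two distinct vertices
      have hr := hconn.preconnected ⟨Sum.inl l, hx⟩ ⟨Sum.inr (Sum.inl l), hz⟩
      refine no_edge_not_reachable (by simp) ?_ hr
      rintro ⟨w, hw⟩ hadj
      have : ((Gt t).Adj (Sum.inl l) w) := by simpa using hadj
      rcases hT hw with h | h <;> subst h <;> simp_all [Gt, GtRel]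
    · -- x_l is undominated
      rcases hdom (Sum.inl l) with h | ⟨u, huT, hadj⟩
      · exact hx h
      · rcases hT huT with h | h <;> subst h
        · exact hx huT
        · simp [Gt, GtRel] at hadj
  · -- y_l is undominated
    rcases hdom (Sum.inr (Sum.inl l)) with h | ⟨u, huT, hadj⟩
    · rcases hT h with h | h <;> simp_all
    · rcases hT huT with h | h <;> subst h <;> simp_all [Gt, GtRel]

theorem stmt11 (t : ℕ) (ht : 3 ≤ t) (i j k : Fin t) (hij : i ≠ j) :
    IsMinCDS (Gt t)
      {Sum.inl i, Sum.inl j, Sum.inr (Sum.inl k)} := by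
  set S : Set (GtV t) := {Sum.inl i, Sum.inl j, Sum.inr (Sum.inl k)} with hS
  constructor
  · constructor
    · -- domination
      intro v
      match v with
      | .inl m =>
        by_cases hmi : m = i
        · exact Or.inl (by simp [hS, hmi])
        · exact Or.inr ⟨Sum.inl i, by simp [hS], by simp [Gt, GtRel, Ne.symm hmi]⟩
      | .inr (.inl m) =>
        by_cases hmi : m = i
        · subst hmi
          exact Or.inr ⟨Sum.inl j, by simp [hS], by simp [Gt, GtRel, Ne.symm hij]⟩
        · exact Or.inr ⟨Sum.inl i, by simp [hS], by simp [Gt, GtRel, Ne.symm hmi]⟩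
      | .inr (.inr _) =>
        exact Or.inr ⟨Sum.inr (Sum.inl k), by simp [hS], by simp [Gt, GtRel]⟩
    · -- connectivity: hub is x_i (if i ≠ k) or x_j (if i = k)
      by_cases hik : i = k
      · refine connected_of_hub _ _ (Sum.inl j) (by simp [hS]) ?_
        intro v hv
        rcases hv with h | h | h <;> subst h
        · exact Or.inr (by simp [Gt, GtRel, hij, Ne.symm hij])
        · exact Or.inl rfl
        · subst hik
          exact Or.inr (by simp [Gt, GtRel, hij, Ne.symm hij])
      · refine connected_of_hub _ _ (Sum.inl i) (by simp [hS]) ?_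
        intro v hv
        rcases hv with h | h | h <;> subst h
        · exact Or.inl rfl
        · exact Or.inr (by simp [Gt, GtRel, hij, Ne.symm hij])
        · exact Or.inr (by simp [Gt, GtRel, hik])
  · -- minimality
    intro T hT hcds
    have hTS : T ⊆ S := hT.subset
    by_cases hxi : (Sum.inl i : GtV t) ∈ T
    · by_cases hxj : (Sum.inl j : GtV t) ∈ T
      · by_cases hyk : (Sum.inr (Sum.inl k) : GtV t) ∈ T
        · -- T = S, contradiction with proper subset
          have : S ⊆ T := by
            intro v hv
            rcases hv with h | h | h <;> subst h <;> assumption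
          exact hT.not_subset this
        · -- z undominated
          rcases hcds.1 (Sum.inr (Sum.inr ())) with h | ⟨u, huT, hadj⟩
          · exact absurd (hTS h) (by simp [hS])
          · rcases hTS huT with h | h | h <;> subst h
            · simp [Gt, GtRel] at hadj
            · simp [Gt, GtRel] at hadj
            · exact hyk huT
      · -- T ⊆ {x_i, y_k}
        refine not_cds_pair t i k T ?_ hcds
        intro v hv
        rcases hTS hv with h | h | h <;> subst h
        · simp
        · exact absurd hv hxj
        · simp
    · -- T ⊆ {x_j, y_k}
      refine not_cds_pair t j k T ?_ hcds
      intro v hv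
      rcases hTS hv with h | h | h <;> subst h
      · exact absurd hv hxi
      · simp
      · simp
end

section
/- In the graph G_t (t ≥ 2), for every x_i ∈ X and every y_j ∈ Y with j ≠ i, the set {x_i, z, y_j} is a minimal connected dominating set of G_t. -/
lemma gt_adj {t : ℕ} {a b : GtV t} :
    (Gt t).Adj a b ↔ a ≠ b ∧ (GtRel t a b ∨ GtRel t b a) := by
  simp [Gt, SimpleGraph.fromRel_adj]

theorem stmt12 (t : ℕ) (ht : 2 ≤ t) (i j : Fin t) (hij : j ≠ i) :
    IsMinCDS (Gt t)
      {Sum.inl i, Sum.inr (Sum.inr ()), Sum.inr (Sum.inl j)} := by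
  set S : Set (GtV t) :=
    {Sum.inl i, Sum.inr (Sum.inr ()), Sum.inr (Sum.inl j)} with hSdef
  have hxS : (Sum.inl i : GtV t) ∈ S := by simp [hSdef]
  have hzS : (Sum.inr (Sum.inr ()) : GtV t) ∈ S := by simp [hSdef]
  have hyS : (Sum.inr (Sum.inl j) : GtV t) ∈ S := by simp [hSdef]
  have hadj_xy : (Gt t).Adj (Sum.inl i) (Sum.inr (Sum.inl j)) := by
    rw [gt_adj]
    refine ⟨by simp, Or.inl ?_⟩
    exact fun h => hij h.symm
  have hadj_yz : (Gt t).Adj (Sum.inr (Sum.inl j)) (Sum.inr (Sum.inr ())) := by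
    rw [gt_adj]; simp [GtRel]
  have hCDS : IsCDS (Gt t) S := by
    constructor
    · intro v
      match v with
      | Sum.inl k =>
        by_cases hk : k = i
        · subst hk; exact Or.inl hxS
        · refine Or.inr ⟨Sum.inl i, hxS, ?_⟩
          rw [gt_adj]
          refine ⟨?_, Or.inl fun h => hk h.symm⟩
          simp only [ne_eq, Sum.inl.injEq]
          exact fun h => hk h.symm
      | Sum.inr (Sum.inl k) =>
        refine Or.inr ⟨Sum.inr (Sum.inr ()), hzS, ?_⟩
        rw [gt_adj]; simp [GtRel]
      | Sum.inr (Sum.inr ()) => exact Or.inl hzS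
    · have hreach : ∀ a (ha : a ∈ S),
          ((Gt t).induce S).Reachable ⟨a, ha⟩ ⟨Sum.inr (Sum.inl j), hyS⟩ := by
        intro a ha
        rcases ha with rfl | rfl | rfl
        · exact SimpleGraph.Adj.reachable (by exact hadj_xy)
        · exact SimpleGraph.Adj.reachable (by exact hadj_yz.symm)
        · exact SimpleGraph.Reachable.refl _
      constructor
      · rintro ⟨a, ha⟩ ⟨b, hb⟩
        exact (hreach a ha).trans (hreach b hb).symm
  refine ⟨hCDS, ?_⟩
  intro T hT hTCDS
  have hsub : T ⊆ S := hT.1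
  by_cases hx : (Sum.inl i : GtV t) ∈ T
  · by_cases hz : (Sum.inr (Sum.inr ()) : GtV t) ∈ T
    · by_cases hy : (Sum.inr (Sum.inl j) : GtV t) ∈ T
      · -- T = S, contradicts strict subset
        exact hT.2 (by intro v hv; rcases hv with rfl | rfl | rfl <;> assumption)
      · -- T ⊆ {x_i, z}, which is disconnected
        have hxiso : ∀ b : T, ¬ ((Gt t).induce T).Adj ⟨Sum.inl i, hx⟩ b := by
          rintro ⟨b, hb⟩ hadj
          have hbS := hsub hb
          have : (Gt t).Adj (Sum.inl i) b := hadj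
          rcases hbS with rfl | rfl | rfl
          · exact (Gt t).irrefl this
          · rw [gt_adj] at this
            rcases this.2 with h | h <;> exact h
          · exact hy hb
        have := hTCDS.2.1 ⟨Sum.inl i, hx⟩ ⟨Sum.inr (Sum.inr ()), hz⟩
        obtain ⟨w⟩ := this
        cases w with
        | cons h p => exact hxiso _ h
    · by_cases hy : (Sum.inr (Sum.inl j) : GtV t) ∈ T
      · -- y_i undominated
        rcases hTCDS.1 (Sum.inr (Sum.inl i)) with hm | ⟨u, hu, hadj⟩
        · rcases hsub hm with h | h | h <;> simp_all
        · rcases hsub hu with rfl | rfl | rfl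
          · rw [gt_adj] at hadj
            rcases hadj.2 with h | h
            · exact h rfl
            · exact h
          · exact hz hu
          · rw [gt_adj] at hadj
            rcases hadj.2 with h | h <;> exact h
      · -- z undominated
        rcases hTCDS.1 (Sum.inr (Sum.inr ())) with hm | ⟨u, hu, hadj⟩
        · exact hz hm
        · rcases hsub hu with rfl | rfl | rfl
          · rw [gt_adj] at hadj
            rcases hadj.2 with h | h <;> exact h
          · exact (Gt t).irrefl hadj
          · exact hy hu
  · -- x_j undominated
    rcases hTCDS.1 (Sum.inl j) with hm | ⟨u, hu, hadj⟩
    · rcases hsub hm with h | h | h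
      · exact hij (by injection h)
      · simp at h
      · simp at h
    · rcases hsub hu with rfl | rfl | rfl
      · exact hx hu
      · rw [gt_adj] at hadj
        rcases hadj.2 with h | h <;> exact h
      · rw [gt_adj] at hadj
        rcases hadj.2 with h | h
        · exact h
        · exact h rfl
end

section
/- For all positive integers k and t ≥ 2, the graph G_t^k, obtained by taking k disjoint copies of G_t (each on 2t+1 vertices) and adding one new vertex s adjacent to all vertices in the X-set of every copy, has exactly ((t^3 + t^2)/2 − t)^k minimal connected dominating sets. -/
/-- Vertices of `G_t^k`: `k` disjoint copies of `G_t` plus a hub vertex `s`. -/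
abbrev GtkV (t k : ℕ) := (Fin k × GtV t) ⊕ Unit

/-- Base relation for `G_t^k`: each copy carries the relation of `G_t`, and
the hub `s` is adjacent to all vertices of every copy's `X`-set. -/
def GtkRel (t k : ℕ) : GtkV t k → GtkV t k → Prop
  | .inl (c, u), .inl (c', u') => c = c' ∧ GtRel t u u'
  | .inr _, .inl (_, .inl _) => True
  | .inl (_, .inl _), .inr _ => True
  | _, _ => False

/-- The graph `G_t^k`. -/
def Gtk (t k : ℕ) : SimpleGraph (GtkV t k) := SimpleGraph.fromRel (GtkRel t k)

namespace SimpleGraph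

variable {V : Type*} {G : SimpleGraph V} {S C : Set V}

theorem induce_connected_of_forall_adj {c : V} (hc : c ∈ S)
    (h : ∀ v ∈ S, v ≠ c → G.Adj c v) : (G.induce S).Connected := by
  refine (connected_iff_exists_forall_reachable _).2 ⟨⟨c, hc⟩, fun ⟨v, hv⟩ ↦ ?_⟩
  by_cases hvc : v = c
  · subst hvc; rfl
  · exact Adj.reachable (G := G.induce S) (h v hv hvc)

theorem Preconnected.subset_of_adj_closed (hS : (G.induce S).Preconnected)
    (hC : ∀ p ∈ S ∩ C, ∀ q ∈ S, G.Adj p q → q ∈ C) (hSC : (S ∩ C).Nonempty) : S ⊆ C := by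
  intro v hv
  by_contra hvC
  obtain ⟨u, huS, huC⟩ := hSC
  obtain ⟨p⟩ := hS ⟨u, huS⟩ ⟨v, hv⟩
  obtain ⟨d, -, hd₁, hd₂⟩ := p.exists_boundary_dart {w | (w : V) ∈ C} huC hvC
  exact hd₂ (hC _ ⟨d.fst.2, hd₁⟩ _ d.snd.2 d.adj)

end SimpleGraph

namespace Gt

variable {t : ℕ}

abbrev x (i : Fin t) : GtV t := .inl i
abbrev y (j : Fin t) : GtV t := .inr (.inl j)
abbrev z : GtV t := .inr (.inr ())

@[simp] theorem adj_x_x {i j : Fin t} : (Gt t).Adj (x i) (x j) ↔ i ≠ j := by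
  simp [Gt, GtRel, ne_comm]
@[simp] theorem adj_x_y {i j : Fin t} : (Gt t).Adj (x i) (y j) ↔ i ≠ j := by simp [Gt, GtRel]
@[simp] theorem adj_y_x {i j : Fin t} : (Gt t).Adj (y j) (x i) ↔ i ≠ j := by simp [Gt, GtRel]
@[simp] theorem not_adj_y_y {i j : Fin t} : ¬ (Gt t).Adj (y i) (y j) := by simp [Gt, GtRel]
@[simp] theorem adj_y_z {j : Fin t} : (Gt t).Adj (y j) z := by simp [Gt, GtRel]
@[simp] theorem adj_z_y {j : Fin t} : (Gt t).Adj z (y j) := by simp [Gt, GtRel]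
@[simp] theorem not_adj_x_z {i : Fin t} : ¬ (Gt t).Adj (x i) z := by simp [Gt, GtRel]
@[simp] theorem not_adj_z_x {i : Fin t} : ¬ (Gt t).Adj z (x i) := by simp [Gt, GtRel]

abbrev Piece (t : ℕ) :=
  {p : Fin t × Fin t // p.1 ≠ p.2} ⊕ {s : Finset (Fin t) // s.card = 2} × Fin t

def pieceSet : Piece t → Set (GtV t)
  | .inl p => {x p.1.1, y p.1.2, z}
  | .inr (s, j) => insert (y j) (x '' s)

theorem exists_x_mem_pieceSet : ∀ p : Piece t, ∃ i, x i ∈ pieceSet p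
  | .inl p => ⟨p.1.1, by simp [pieceSet]⟩
  | .inr (s, j) => by
    obtain ⟨i, hi⟩ := Finset.card_pos.mp (by omega : 0 < s.1.card)
    exact ⟨i, by simp [pieceSet, hi]⟩

theorem isCDS_pieceSet : ∀ p : Piece t, IsCDS (Gt t) (pieceSet p)
  | .inl ⟨(a, b), hab⟩ => by
    refine ⟨?_, SimpleGraph.induce_connected_of_forall_adj (c := y b) (by simp [pieceSet]) ?_⟩
    · rintro (i | j | ⟨⟨⟩⟩)
      · by_cases hia : i = a
        · simp [pieceSet, hia]
        · exact Or.inr ⟨x a, by simp [pieceSet], by simpa [eq_comm] using hia⟩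
      · exact Or.inr ⟨z, by simp [pieceSet], adj_z_y⟩
      · simp [pieceSet]
    · simp [pieceSet, hab]
  | .inr (s, j) => by
    have hs : 1 < s.1.card := by omega
    obtain ⟨a, has, haj⟩ := Finset.exists_mem_ne hs j
    refine ⟨?_, SimpleGraph.induce_connected_of_forall_adj (c := x a) (by simp [pieceSet, has]) ?_⟩
    · rintro (i | m | ⟨⟨⟩⟩)
      · by_cases his : i ∈ s.1
        · simp [pieceSet, his]
        · exact Or.inr ⟨x a, by simp [pieceSet, has], adj_x_x.mpr (by rintro rfl; exact his has)⟩
      · by_cases hmj : m = j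
        · simp [pieceSet, hmj]
        · obtain ⟨b, hbs, hbm⟩ := Finset.exists_mem_ne hs m
          exact Or.inr ⟨x b, by simp [pieceSet, hbs], by simpa using hbm⟩
      · exact Or.inr ⟨y j, by simp [pieceSet], adj_y_z⟩
    · simp [pieceSet, haj, eq_comm]

theorem eq_of_pieceSet_subset : ∀ {p q : Piece t}, pieceSet p ⊆ pieceSet q → p = q
  | .inl ⟨(a, b), _⟩, .inl ⟨(a', b'), _⟩, h => by
    have ha : a = a' := by simpa [pieceSet] using h (show x a ∈ _ by simp [pieceSet])
    have hb : b = b' := by simpa [pieceSet] using h (show y b ∈ _ by simp [pieceSet])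
    subst ha hb; rfl
  | .inl _, .inr _, h => by simpa [pieceSet] using h (show z ∈ _ by simp [pieceSet])
  | .inr (s, _), .inl ⟨(a', _), _⟩, h => by
    obtain ⟨a, b, hab, hs⟩ := Finset.card_eq_two.mp s.2
    have ha : a = a' := by simpa [pieceSet] using h (show x a ∈ _ by simp [pieceSet, hs])
    have hb : b = a' := by simpa [pieceSet] using h (show x b ∈ _ by simp [pieceSet, hs])
    exact absurd (ha.trans hb.symm) hab
  | .inr (s, j), .inr (s', j'), h => by
    have hj : j = j' := by simpa [pieceSet] using h (show y j ∈ _ by simp [pieceSet])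
    have hss : s.1 ⊆ s'.1 := fun i hi ↦ by
      simpa [pieceSet] using h (show x i ∈ _ by simp [pieceSet, hi])
    have hs : s = s' := Subtype.ext (Finset.eq_of_subset_of_card_le hss (by rw [s.2, s'.2]))
    rw [hs, hj]

theorem card_piece : Fintype.card (Piece t) = (t ^ 3 + t ^ 2) / 2 - t := by
  have hoff : Fintype.card {p : Fin t × Fin t // p.1 ≠ p.2} = t * t - t := by
    rw [Fintype.card_subtype, show t * t - t = (Finset.univ : Finset (Fin t)).offDiag.card by simp]
    congr 1
    ext
    simp
  have hpairs : 2 * t.choose 2 = t * (t - 1) := by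
    rw [Nat.choose_two_right, Nat.mul_div_cancel' (Nat.even_mul_pred_self t).two_dvd]
  simp only [Fintype.card_sum, Fintype.card_prod, hoff, Fintype.card_finset_len, Fintype.card_fin]
  have hsum : t ^ 3 + t ^ 2 = 2 * (t * t + t.choose 2 * t) := by
    rcases t with _ | n
    · simp
    · rw [Nat.add_sub_cancel] at hpairs
      linear_combination (n + 1) * hpairs.symm
  rw [hsum, Nat.mul_div_cancel_left _ two_pos]
  have := Nat.le_mul_self t
  omega

/-- `Set.range Sum.inr` is `Y ∪ {z}`; `hsep` says that no nonempty part of it is cut off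
from the rest of `G_t[P]`. -/
theorem exists_pieceSet_subset {P : Set (GtV t)}
    (hdom : ∀ r, Sum.inr r ∈ P ∨ ∃ w ∈ P, (Gt t).Adj w (Sum.inr r))
    (hsep : ∀ C ⊆ Set.range Sum.inr,
      (∀ p ∈ P ∩ C, ∀ q ∈ P, (Gt t).Adj p q → q ∈ C) → Disjoint P C) :
    ∃ p : Piece t, pieceSet p ⊆ P := by
  obtain ⟨i, j, hij, hi, hj⟩ : ∃ i j, i ≠ j ∧ x i ∈ P ∧ y j ∈ P := by
    by_contra! h
    have hclosed :
        ∀ p ∈ P ∩ Set.range Sum.inr, ∀ q ∈ P, (Gt t).Adj p q → q ∈ Set.range Sum.inr := by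
      rintro _ ⟨hp, r, rfl⟩ (m | r') hq hadj
      · rcases r with j | ⟨⟨⟩⟩
        · exact absurd hp (h m j (by simpa using hadj.symm) hq)
        · simp at hadj
      · exact ⟨r', rfl⟩
    have hdisj := Set.disjoint_left.mp (hsep _ subset_rfl hclosed)
    rcases hdom (.inr ()) with hz | ⟨_ | r, hw, hadj⟩
    · exact hdisj hz ⟨_, rfl⟩
    · simp at hadj
    · exact hdisj hw ⟨r, rfl⟩
  by_cases hz : z ∈ P
  · exact ⟨.inl ⟨(i, j), hij⟩, by simp [pieceSet, Set.insert_subset_iff, hi, hj, hz]⟩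
  by_cases hm : ∃ m ≠ i, x m ∈ P
  · obtain ⟨m, hmi, hm⟩ := hm
    refine ⟨.inr (⟨{i, m}, Finset.card_pair hmi.symm⟩, j), ?_⟩
    simp [pieceSet, Set.insert_subset_iff, hi, hj, hm]
  push Not at hm
  have hyi_nbr : ∀ q ∈ P, ¬ (Gt t).Adj q (y i) := by
    rintro (m | _ | ⟨⟨⟩⟩) hq hadj
    · exact hm m (by simpa using hadj) hq
    · simp at hadj
    · exact hz hq
  have hyi : y i ∈ P := (hdom (.inl i)).resolve_right fun ⟨w, hw, hadj⟩ ↦ hyi_nbr w hw hadj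
  refine absurd (Set.disjoint_left.mp (hsep {y i} (by simp) ?_) hyi) (by simp)
  rintro _ ⟨-, rfl⟩ q hq hadj
  exact absurd hadj.symm (hyi_nbr q hq)

end Gt

namespace Gtk

open Gt

variable {t k : ℕ}

abbrev hub : GtkV t k := .inr ()

@[simp] theorem adj_inl_inl {c c' : Fin k} {u u' : GtV t} :
    (Gtk t k).Adj (.inl (c, u)) (.inl (c', u')) ↔ c = c' ∧ (Gt t).Adj u u' := by
  rcases u with _ | _ | _ <;> rcases u' with _ | _ | _ <;> simp [Gtk, GtkRel, Gt, GtRel] <;> tauto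

@[simp] theorem adj_inl_hub {c : Fin k} {u : GtV t} :
    (Gtk t k).Adj (.inl (c, u)) hub ↔ u.isLeft := by
  rcases u with _ | _ | _ <;> simp [Gtk, GtkRel]

@[simp] theorem adj_hub_inl {c : Fin k} {u : GtV t} :
    (Gtk t k).Adj hub (.inl (c, u)) ↔ u.isLeft := by
  rw [SimpleGraph.adj_comm, adj_inl_hub]

def copy (c : Fin k) : Gt t ↪g Gtk t k where
  toFun u := .inl (c, u)
  inj' _ _ h := by simpa using h
  map_rel_iff' {_ _} := adj_inl_inl.trans (and_iff_right rfl)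

@[simp] theorem copy_apply (c : Fin k) (u : GtV t) : copy c u = .inl (c, u) := rfl

theorem eq_hub_or_mem_copy_of_adj {c : Fin k} {u : GtV t} {w : GtkV t k}
    (h : (Gtk t k).Adj (.inl (c, u)) w) : w = hub ∨ ∃ u', w = .inl (c, u') := by
  rcases w with ⟨c', u'⟩ | ⟨⟨⟩⟩
  · exact .inr ⟨u', by rw [(adj_inl_inl.mp h).1]⟩
  · exact .inl rfl

theorem mem_copy_of_adj_inr {c : Fin k} {r : Fin t ⊕ Unit} {w : GtkV t k}
    (h : (Gtk t k).Adj (.inl (c, .inr r)) w) : ∃ u, w = .inl (c, u) :=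
  (eq_hub_or_mem_copy_of_adj h).resolve_left (by rintro rfl; simp at h)

section IsCDS

variable {S : Set (GtkV t k)}

theorem exists_mem_copy_of_isCDS (hS : IsCDS (Gtk t k) S) (c : Fin k) :
    ∃ u, (.inl (c, u) : GtkV t k) ∈ S := by
  rcases hS.1 (.inl (c, z)) with hz | ⟨w, hw, hadj⟩
  · exact ⟨z, hz⟩
  · obtain ⟨u, rfl⟩ := mem_copy_of_adj_inr hadj.symm
    exact ⟨u, hw⟩

theorem hub_mem_of_isCDS (hk : k ≠ 1) (hS : IsCDS (Gtk t k) S) : hub ∈ S := by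
  by_contra hhub
  obtain ⟨v, hv⟩ := hS.2.nonempty
  rcases v with ⟨c, u⟩ | ⟨⟨⟩⟩
  · have : Nontrivial (Fin k) := Fin.nontrivial_iff_two_le.mpr (by have := c.pos; omega)
    obtain ⟨c', hc'⟩ := exists_ne c
    obtain ⟨u', hu'⟩ := exists_mem_copy_of_isCDS hS c'
    have hsub : S ⊆ Set.range (copy c) := by
      refine hS.2.preconnected.subset_of_adj_closed ?_ ⟨_, hv, u, rfl⟩
      rintro _ ⟨-, u, rfl⟩ q hq hadj
      rcases eq_hub_or_mem_copy_of_adj hadj with rfl | ⟨u', rfl⟩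
      · exact absurd hq hhub
      · exact ⟨u', rfl⟩
    obtain ⟨_, hc⟩ := hsub hu'
    exact hc' (congrArg Prod.fst (Sum.inl_injective hc)).symm
  · exact hhub hv

theorem exists_pieceSet_subset_of_isCDS (hS : IsCDS (Gtk t k) S) (c : Fin k) :
    ∃ p : Piece t, pieceSet p ⊆ copy c ⁻¹' S := by
  refine Gt.exists_pieceSet_subset (fun r ↦ ?_) fun C hC hclosed ↦ ?_
  · rcases hS.1 (.inl (c, .inr r)) with h | ⟨w, hw, hadj⟩
    · exact .inl h
    · obtain ⟨u, rfl⟩ := mem_copy_of_adj_inr hadj.symm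
      exact .inr ⟨u, hw, (adj_inl_inl.mp hadj).2⟩
  rw [Set.disjoint_left]
  intro u hu huC
  have hsub : S ⊆ copy c '' C := by
    refine hS.2.preconnected.subset_of_adj_closed ?_ ⟨_, hu, u, huC, rfl⟩
    rintro _ ⟨hpS, p, hpC, rfl⟩ q hq hadj
    obtain ⟨r, rfl⟩ := hC hpC
    obtain ⟨u', rfl⟩ := mem_copy_of_adj_inr hadj
    exact ⟨u', hclosed _ ⟨hpS, hpC⟩ u' hq (adj_inl_inl.mp hadj).2, rfl⟩
  rcases hS.1 hub with h | ⟨w, hw, hadj⟩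
  · obtain ⟨_, -, h⟩ := hsub h
    exact Sum.inl_ne_inr h
  · obtain ⟨_, hpC, rfl⟩ := hsub hw
    obtain ⟨r, rfl⟩ := hC hpC
    simp at hadj

end IsCDS

/-- For `k = 1` the hub is dominated by the piece's `x` and is not needed for connectivity. -/
def ofPieces (f : Fin k → Piece t) : Set (GtkV t k)
  | .inl (c, u) => u ∈ pieceSet (f c)
  | .inr () => k ≠ 1

variable {f g : Fin k → Piece t}

theorem exists_ofPieces_subset {S : Set (GtkV t k)} (hS : IsCDS (Gtk t k) S) :
    ∃ f, ofPieces f ⊆ S := by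
  choose f hf using exists_pieceSet_subset_of_isCDS hS
  refine ⟨f, ?_⟩
  rintro (⟨c, u⟩ | ⟨⟨⟩⟩) hv
  · exact hf c hv
  · exact hub_mem_of_isCDS hv hS

theorem exists_reachable_x_of_mem_ofPieces {c : Fin k} {u : GtV t} (hu : u ∈ pieceSet (f c)) :
    ∃ i, ∃ hi : x i ∈ pieceSet (f c), ((Gtk t k).induce (ofPieces f)).Reachable
      ⟨.inl (c, u), hu⟩ ⟨.inl (c, x i), hi⟩ := by
  obtain ⟨i, hi⟩ := exists_x_mem_pieceSet (f c)
  have hmaps : Set.MapsTo (copy c) (pieceSet (f c)) (ofPieces f) := fun _ h ↦ h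
  exact ⟨i, hi, ((isCDS_pieceSet (f c)).2 ⟨u, hu⟩ ⟨x i, hi⟩).map
    (SimpleGraph.induceHom (copy c).toHom hmaps)⟩

theorem reachable_x_x_of_mem_ofPieces {c c' : Fin k} {i i' : Fin t}
    (hi : x i ∈ pieceSet (f c)) (hi' : x i' ∈ pieceSet (f c')) :
    ((Gtk t k).induce (ofPieces f)).Reachable ⟨.inl (c, x i), hi⟩ ⟨.inl (c', x i'), hi'⟩ := by
  by_cases hc : c = c'
  · subst hc
    by_cases hii : i = i'
    · subst hii; rfl
    · exact SimpleGraph.Adj.reachable (by simpa using hii)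
  · have hhub : hub ∈ ofPieces f := fun hk ↦ by subst hk; exact hc (Subsingleton.elim c c')
    exact (SimpleGraph.Adj.reachable (G := (Gtk t k).induce (ofPieces f)) (v := ⟨hub, hhub⟩)
      (by simp)).trans (SimpleGraph.Adj.reachable (by simp))

theorem isCDS_ofPieces (f : Fin k → Piece t) : IsCDS (Gtk t k) (ofPieces f) := by
  refine ⟨?_, ?_⟩
  · rintro (⟨c, u⟩ | ⟨⟨⟩⟩)
    · rcases (isCDS_pieceSet (f c)).1 u with hu | ⟨w, hw, hadj⟩
      · exact .inl hu
      · exact .inr ⟨.inl (c, w), hw, by simpa using hadj⟩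
    · rcases eq_or_ne k 1 with rfl | hk
      · obtain ⟨i, hi⟩ := exists_x_mem_pieceSet (f 0)
        exact .inr ⟨.inl (0, x i), hi, by simp⟩
      · exact .inl hk
  · rw [SimpleGraph.connected_iff_exists_forall_reachable]
    rcases eq_or_ne k 1 with rfl | hk
    · obtain ⟨i, hi⟩ := exists_x_mem_pieceSet (f 0)
      refine ⟨⟨.inl (0, x i), hi⟩, ?_⟩
      rintro ⟨⟨c, u⟩ | ⟨⟨⟩⟩, hv⟩
      · obtain ⟨i', hi', hreach⟩ := exists_reachable_x_of_mem_ofPieces hv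
        exact (reachable_x_x_of_mem_ofPieces hi hi').trans hreach.symm
      · exact absurd rfl hv
    · refine ⟨⟨hub, hk⟩, ?_⟩
      rintro ⟨⟨_, _⟩ | ⟨⟨⟩⟩, hv⟩
      · obtain ⟨i', hi', hreach⟩ := exists_reachable_x_of_mem_ofPieces hv
        exact (SimpleGraph.Adj.reachable (by simp)).trans hreach.symm
      · rfl

theorem eq_of_ofPieces_subset (h : ofPieces g ⊆ ofPieces f) : g = f :=
  funext fun c ↦ eq_of_pieceSet_subset fun u ↦ @h (.inl (c, u))

theorem setOf_isMinCDS_eq_range_ofPieces :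
    {S | IsMinCDS (Gtk t k) S} = Set.range (ofPieces (t := t) (k := k)) := by
  ext S
  constructor
  · rintro ⟨hS, hmin⟩
    obtain ⟨f, hf⟩ := exists_ofPieces_subset hS
    exact ⟨f, hf.eq_of_not_ssubset fun hlt ↦ hmin _ hlt (isCDS_ofPieces f)⟩
  · rintro ⟨f, rfl⟩
    refine ⟨isCDS_ofPieces f, fun T hT hTcds ↦ ?_⟩
    obtain ⟨g, hg⟩ := exists_ofPieces_subset hTcds
    obtain rfl := eq_of_ofPieces_subset (hg.trans hT.subset)
    exact hT.not_subset hg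

end Gtk

theorem stmt13_general (t k : ℕ) :
    {S : Set (GtkV t k) | IsMinCDS (Gtk t k) S}.ncard =
      ((t ^ 3 + t ^ 2) / 2 - t) ^ k := by
  rw [Gtk.setOf_isMinCDS_eq_range_ofPieces,
    Set.ncard_range_of_injective fun f g h ↦ Gtk.eq_of_ofPieces_subset h.le,
    Nat.card_fun, Nat.card_eq_fintype_card, Gt.card_piece, Nat.card_fin]

theorem stmt13 (t k : ℕ) (ht : 2 ≤ t) (hk : 1 ≤ k) :
    {S : Set (GtkV t k) | IsMinCDS (Gtk t k) S}.ncard =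
      ((t ^ 3 + t ^ 2) / 2 - t) ^ k :=
  stmt13_general t k
end

section
/- For every n ≡ 1 (mod 9) with n ≥ 10, there exists a connected graph of order n with at least 36^{(n−1)/9} minimal connected dominating sets; hence the maximum number of minimal connected dominating sets in a connected n-vertex graph is in Ω(1.4890^n). -/
/-!
Glue copies of a gadget `H` along a hub joined to a clique `X ⊆ V(H)`, the `X`-vertices of all
copies being pairwise adjacent. A set meeting every copy in a local CDS (dominating the vertices
of the copy outside `X`, every component meeting `X`) is a CDS of the glued graph, and conversely
the trace of any CDS on a copy is a local CDS. Hence choosing a minimal local CDS in each copy gives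
a minimal CDS, distinct choices giving distinct sets: `k` copies with `m` minimal local CDSs yield
at least `m ^ k` minimal CDSs. For the gadget `G₄` an exhaustive check gives `m = 36`.
-/

theorem SimpleGraph.Reachable.mem_of_adj_closed {V : Type*} {G : SimpleGraph V} {s : Set V}
    (hs : ∀ u ∈ s, ∀ v, G.Adj u v → v ∈ s) {u v : V} (h : G.Reachable u v) (hu : u ∈ s) :
    v ∈ s := by
  obtain ⟨p⟩ := h
  induction p with
  | nil => exact hu
  | cons h _ ih => exact ih (hs _ hu _ h)

theorem IsCDS.connected {V : Type*} {G : SimpleGraph V} {S : Set V} (h : IsCDS G S) :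
    G.Connected := by
  obtain ⟨hdom, hconn⟩ := h
  have hreach : ∀ v, ∃ s : S, G.Reachable v s := fun v => by
    rcases hdom v with hv | ⟨u, hu, huv⟩
    · exact ⟨⟨v, hv⟩, .refl _⟩
    · exact ⟨⟨u, hu⟩, huv.symm.reachable⟩
  obtain ⟨s⟩ := hconn.nonempty
  refine (SimpleGraph.connected_iff _).2 ⟨fun u v => ?_, ⟨s⟩⟩
  obtain ⟨su, hu⟩ := hreach u
  obtain ⟨sv, hv⟩ := hreach v
  exact hu.trans
    (((hconn.preconnected su sv).map (SimpleGraph.Embedding.induce S).toHom).trans hv.symm)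

theorem Finset.exists_subset_coe_iff {α : Type*} {D : Finset α} {Q : Set α → Prop} :
    (∃ C ⊆ (D : Set α), Q C) ↔ ∃ C ⊆ D, Q C := by
  refine ⟨fun ⟨C, hC, hQ⟩ => ?_, fun ⟨C, hC, hQ⟩ => ⟨C, Finset.coe_subset.2 hC, hQ⟩⟩
  have hfin := D.finite_toSet.subset hC
  exact ⟨hfin.toFinset, by simpa [← Finset.coe_subset] using hC, by simpa using hQ⟩

theorem Finset.minimal_coe_iff {α : Type*} {D : Finset α} {P : Set α → Prop} :
    Minimal P (D : Set α) ↔ P D ∧ ∀ T ⊆ D, P T → D ⊆ T := by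
  refine ⟨fun h => ⟨h.prop, fun T hT hP => Finset.coe_subset.1 (h.2 hP (Finset.coe_subset.2 hT))⟩,
    fun ⟨hD, h⟩ => ⟨hD, fun T hP hT => ?_⟩⟩
  obtain ⟨T', hT', rfl⟩ : ∃ T' ⊆ D, (T' : Set α) = T := by
    simpa using (Finset.exists_subset_coe_iff (Q := (· = T))).1 ⟨T, hT, rfl⟩
  exact Finset.coe_subset.2 (h T' hT' hP)

instance Finset.decidableMinimalCoe {α : Type*} [DecidableEq α] {P : Set α → Prop}
    [∀ T : Finset α, Decidable (P T)] (D : Finset α) : Decidable (Minimal P (D : Set α)) :=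
  decidable_of_iff _ Finset.minimal_coe_iff.symm

section Local

variable {W : Type*} (H : SimpleGraph W) (X : Set W)

def DominatesOutside (D : Set W) : Prop := ∀ w ∉ X, w ∈ D ∨ ∃ u ∈ D, H.Adj u w

def HasStrandedPart (T : Set W) : Prop :=
  ∃ C ⊆ T, C.Nonempty ∧ (∀ a ∈ C, a ∉ X) ∧ ∀ a ∈ C, ∀ b ∈ T, H.Adj a b → b ∈ C

/-- For `X ≠ univ` a clique, these are the CDSs avoiding the apex of the cone over `H` whose apex is
joined to `X`. -/
def IsLocalCDS (D : Set W) : Prop := DominatesOutside H X D ∧ ¬ HasStrandedPart H X D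

instance [DecidableEq W] [DecidableRel H.Adj] [DecidablePred (· ∈ X)] (T : Finset W) :
    Decidable (HasStrandedPart H X T) :=
  decidable_of_iff (∃ C ⊆ T, C.Nonempty ∧ (∀ a ∈ C, a ∉ X) ∧ ∀ a ∈ C, ∀ b ∈ T, H.Adj a b → b ∈ C)
    (by simp only [HasStrandedPart, Finset.exists_subset_coe_iff, Finset.coe_nonempty,
      Finset.mem_coe])

instance [Fintype W] [DecidableEq W] [DecidableRel H.Adj] [DecidablePred (· ∈ X)]
    (D : Finset W) : Decidable (IsLocalCDS H X D) :=
  decidable_of_iff ((∀ w ∉ X, w ∈ D ∨ ∃ u ∈ D, H.Adj u w) ∧ ¬ HasStrandedPart H X D)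
    (by simp only [IsLocalCDS, DominatesOutside, Finset.mem_coe])

variable {H X}

theorem exists_reachable_of_not_hasStrandedPart {D : Set W} (hD : ¬ HasStrandedPart H X D)
    {a : W} (ha : a ∈ D) : ∃ x, ∃ hx : x ∈ D, x ∈ X ∧ (H.induce D).Reachable ⟨a, ha⟩ ⟨x, hx⟩ := by
  by_contra hna
  refine hD ⟨{b | ∃ hb : b ∈ D, ¬ ∃ x, ∃ hx : x ∈ D, x ∈ X ∧
    (H.induce D).Reachable ⟨b, hb⟩ ⟨x, hx⟩}, fun b hb => hb.1, ⟨a, ha, hna⟩, ?_, ?_⟩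
  · rintro b ⟨hb, hbX⟩ hX
    exact hbX ⟨b, hb, hX, .refl _⟩
  · rintro b ⟨hb, hbX⟩ c hc hbc
    exact ⟨hc, fun ⟨x, hx, hxX, hr⟩ => hbX ⟨x, hx, hxX, (show (H.induce D).Adj ⟨b, hb⟩ ⟨c, hc⟩
      from hbc).reachable.trans hr⟩⟩

end Local

section Copies

variable {W : Type*} (H : SimpleGraph W) (X : Set W) (ι : Type*)

/-- Besides the hub, the `X`-vertices of distinct copies are joined, so that all `X`-vertices
form a clique. -/
def copiesWithHub : SimpleGraph (Option (ι × W)) where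
  Adj
    | none, none => False
    | none, some (_, b) => b ∈ X
    | some (_, a), none => a ∈ X
    | some (i, a), some (j, b) => (i = j ∧ H.Adj a b) ∨ (i ≠ j ∧ a ∈ X ∧ b ∈ X)
  symm := ⟨by
    rintro (_ | ⟨i, a⟩) (_ | ⟨j, b⟩) h
    · exact h
    · exact h
    · exact h
    · rcases h with ⟨rfl, h⟩ | ⟨hij, ha, hb⟩
      exacts [Or.inl ⟨rfl, h.symm⟩, Or.inr ⟨Ne.symm hij, hb, ha⟩]⟩
  loopless := ⟨by
    rintro (_ | ⟨i, a⟩) h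
    · exact h
    · rcases h with ⟨-, h⟩ | ⟨h, -⟩
      exacts [H.ne_of_adj h rfl, h rfl]⟩

variable {ι}

def unionOfCopies (D : ι → Set W) : Set (Option (ι × W)) :=
  {v | v.elim False fun p => p.2 ∈ D p.1}

def copyTrace (T : Set (Option (ι × W))) (i : ι) : Set W := {a | some (i, a) ∈ T}

variable {H X}

theorem reachable_copy {D : ι → Set W} (i : ι) {a b : W} (ha : a ∈ D i) (hb : b ∈ D i)
    (h : (H.induce (D i)).Reachable ⟨a, ha⟩ ⟨b, hb⟩) :
    ((copiesWithHub H X ι).induce (unionOfCopies D)).Reachable ⟨some (i, a), ha⟩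
      ⟨some (i, b), hb⟩ :=
  let f : H.induce (D i) →g (copiesWithHub H X ι).induce (unionOfCopies D) :=
    { toFun := fun a => ⟨some (i, a.1), a.2⟩, map_rel' := fun h => Or.inl ⟨rfl, h⟩ }
  h.map f

theorem reachable_of_mem_clique (hX : H.IsClique X) {D : ι → Set W} {i j : ι} {a b : W}
    (ha : a ∈ D i) (hb : b ∈ D j) (haX : a ∈ X) (hbX : b ∈ X) :
    ((copiesWithHub H X ι).induce (unionOfCopies D)).Reachable ⟨some (i, a), ha⟩
      ⟨some (j, b), hb⟩ := by
  by_cases hij : i = j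
  · subst hij
    by_cases hab : a = b
    · subst hab
      rfl
    · exact SimpleGraph.Adj.reachable (Or.inl ⟨rfl, hX haX hbX hab⟩)
  · exact SimpleGraph.Adj.reachable (Or.inr ⟨hij, haX, hbX⟩)

theorem IsLocalCDS.exists_mem_clique {D : Set W} (hD : IsLocalCDS H X D) (hW : ∃ w, w ∉ X) :
    ∃ x ∈ D, x ∈ X := by
  obtain ⟨w, hw⟩ := hW
  obtain ⟨a, ha⟩ : D.Nonempty := by
    rcases hD.1 w hw with h | ⟨u, hu, -⟩
    exacts [⟨w, h⟩, ⟨u, hu⟩]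
  obtain ⟨x, hx, hxX, -⟩ := exists_reachable_of_not_hasStrandedPart hD.2 ha
  exact ⟨x, hx, hxX⟩

theorem isCDS_unionOfCopies [Nonempty ι] (hX : H.IsClique X) (hW : ∃ w, w ∉ X)
    {D : ι → Set W} (hD : ∀ i, IsLocalCDS H X (D i)) :
    IsCDS (copiesWithHub H X ι) (unionOfCopies D) := by
  have hDX i := (hD i).exists_mem_clique hW
  have hreach i a (ha : a ∈ D i) : ∃ x, ∃ hx : x ∈ D i, x ∈ X ∧
      ((copiesWithHub H X ι).induce (unionOfCopies D)).Reachable ⟨some (i, a), ha⟩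
        ⟨some (i, x), hx⟩ := by
    obtain ⟨x, hx, hxX, hr⟩ := exists_reachable_of_not_hasStrandedPart (hD i).2 ha
    exact ⟨x, hx, hxX, reachable_copy i ha hx hr⟩
  refine ⟨?_, (SimpleGraph.connected_iff _).2 ⟨?_, ?_⟩⟩
  · rintro (_ | ⟨i, a⟩)
    · obtain ⟨x, hx, hxX⟩ := hDX (Classical.arbitrary ι)
      exact Or.inr ⟨some (_, x), hx, hxX⟩
    by_cases ha : a ∈ D i
    · exact Or.inl ha
    right
    by_cases haX : a ∈ X
    · obtain ⟨x, hx, hxX⟩ := hDX i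
      exact ⟨some (i, x), hx, Or.inl ⟨rfl, hX hxX haX (ne_of_mem_of_not_mem hx ha)⟩⟩
    · rcases (hD i).1 a haX with h | ⟨u, hu, hua⟩
      exacts [absurd h ha, ⟨some (i, u), hu, Or.inl ⟨rfl, hua⟩⟩]
  · rintro ⟨_ | ⟨i, a⟩, ha⟩ ⟨_ | ⟨j, b⟩, hb⟩
    · exact (ha : False).elim
    · exact (ha : False).elim
    · exact (hb : False).elim
    obtain ⟨x, hx, hxX, hax⟩ := hreach i a ha
    obtain ⟨y, hy, hyX, hby⟩ := hreach j b hb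
    exact hax.trans ((reachable_of_mem_clique hX hx hy hxX hyX).trans hby.symm)
  · obtain ⟨x, hx, -⟩ := hDX (Classical.arbitrary ι)
    exact ⟨⟨some (_, x), hx⟩⟩

theorem IsCDS.isLocalCDS_copyTrace {T : Set (Option (ι × W))}
    (hT : IsCDS (copiesWithHub H X ι) T) (i : ι) : IsLocalCDS H X (copyTrace T i) := by
  obtain ⟨hdom, hconn⟩ := hT
  refine ⟨fun w hw => ?_, ?_⟩
  · rcases hdom (some (i, w)) with h | ⟨_ | ⟨j, b⟩, hu, hadj⟩
    · exact Or.inl h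
    · exact absurd hadj hw
    · rcases hadj with ⟨rfl, hbw⟩ | ⟨-, -, hwX⟩
      exacts [Or.inr ⟨b, hu, hbw⟩, absurd hwX hw]
  rintro ⟨C, hCT, ⟨c, hc⟩, hCX, hCclosed⟩
  -- the copy of `C` is closed in `T`, yet `T` also holds a neighbour of the hub
  obtain ⟨t, htT, htC⟩ : ∃ t ∈ T, ∀ a ∈ C, t ≠ some (i, a) := by
    rcases hdom none with h | ⟨_ | ⟨j, b⟩, hu, hadj⟩
    · exact ⟨none, h, fun _ _ => Option.some_ne_none _ ∘ Eq.symm⟩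
    · exact (hadj : False).elim
    · refine ⟨some (j, b), hu, fun a ha heq => hCX a ha ?_⟩
      cases heq
      exact hadj
  have hclosed : ∀ u ∈ {u : T | ∃ a ∈ C, u.1 = some (i, a)}, ∀ v,
      ((copiesWithHub H X ι).induce T).Adj u v → v ∈ {u : T | ∃ a ∈ C, u.1 = some (i, a)} := by
    rintro ⟨_, hu⟩ ⟨a, ha, rfl⟩ ⟨_ | ⟨j, b⟩, hv⟩ hadj
    · exact absurd hadj (hCX a ha)
    · rcases hadj with ⟨rfl, hab⟩ | ⟨-, haX, -⟩
      exacts [⟨b, hCclosed a ha b hv hab, rfl⟩, absurd haX (hCX a ha)]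
  obtain ⟨a, ha, heq⟩ := (hconn.preconnected ⟨some (i, c), hCT hc⟩ ⟨t, htT⟩).mem_of_adj_closed
    hclosed ⟨c, hc, rfl⟩
  exact htC a ha heq

theorem isMinCDS_unionOfCopies [Nonempty ι] (hX : H.IsClique X) (hW : ∃ w, w ∉ X)
    {D : ι → Set W} (hD : ∀ i, Minimal (IsLocalCDS H X) (D i)) :
    IsMinCDS (copiesWithHub H X ι) (unionOfCopies D) := by
  refine ⟨isCDS_unionOfCopies hX hW fun i => (hD i).prop, fun T hTS hT => hTS.2 ?_⟩
  rintro (_ | ⟨i, a⟩) ha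
  · exact (ha : False).elim
  · exact (hD i).2 (hT.isLocalCDS_copyTrace i) (fun b hb => hTS.1 hb) ha

theorem ncard_pow_le_ncard_isMinCDS [Finite W] [Finite ι] [Nonempty ι] (hX : H.IsClique X)
    (hW : ∃ w, w ∉ X) :
    {D | Minimal (IsLocalCDS H X) D}.ncard ^ Nat.card ι ≤
      {S | IsMinCDS (copiesWithHub H X ι) S}.ncard := by
  let f : (ι → {D | Minimal (IsLocalCDS H X) D}) → {S | IsMinCDS (copiesWithHub H X ι) S} :=
    fun D => ⟨unionOfCopies fun i => D i, isMinCDS_unionOfCopies hX hW fun i => (D i).2⟩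
  have hf : f.Injective := fun D D' h =>
    funext fun i => Subtype.ext (congrArg (copyTrace · i) (congrArg Subtype.val h))
  rw [← Nat.card_coe_set_eq, ← Nat.card_fun, ← Nat.card_coe_set_eq]
  exact Nat.card_le_card_of_injective f hf

end Copies

/-- `none` is `z`, `some (false, i)` is `xᵢ` and `some (true, i)` is `yᵢ`. -/
abbrev GadgetVertex := Option (Bool × Fin 4)

def gadgetRel : GadgetVertex → GadgetVertex → Prop
  | some (false, i), some (_, j) => i ≠ j
  | none, some (true, _) => True
  | _, _ => False

instance : DecidableRel gadgetRel := fun a b => by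
  rcases a with _ | ⟨_ | _, i⟩ <;> rcases b with _ | ⟨_ | _, j⟩ <;> unfold gadgetRel <;>
    infer_instance

def gadget : SimpleGraph GadgetVertex := SimpleGraph.fromRel gadgetRel

instance : DecidableRel gadget.Adj := fun a b =>
  decidable_of_iff _ (SimpleGraph.fromRel_adj gadgetRel a b).symm

def gadgetX : Set GadgetVertex := {v | ∃ i, v = some (false, i)}

instance : DecidablePred (· ∈ gadgetX) := fun v => by unfold gadgetX; infer_instance

theorem gadget_isClique : gadget.IsClique gadgetX := by
  rintro _ ⟨i, rfl⟩ _ ⟨j, rfl⟩ hij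
  exact ⟨hij, Or.inl fun h => hij (h ▸ rfl)⟩

theorem none_notMem_gadgetX : none ∉ gadgetX := by
  rintro ⟨i, ⟨⟩⟩

theorem le_ncard_minimal_isLocalCDS_gadget :
    36 ≤ {D | Minimal (IsLocalCDS gadget gadgetX) D}.ncard := by
  have hcard : ((Finset.univ.powersetCard 3).filter fun D : Finset GadgetVertex =>
      Minimal (IsLocalCDS gadget gadgetX) (D : Set GadgetVertex)).card = 36 := by
    -- the sets `{xᵢ, xⱼ, yₗ}` and `{xᵢ, yⱼ, z}` with `i ≠ j`
    decide
  rw [← hcard, ← Finset.card_image_of_injective _ Finset.coe_injective, ← Set.ncard_coe_finset]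
  refine Set.ncard_le_ncard (fun _ himage => ?_) (Set.toFinite _)
  obtain ⟨D, hD, rfl⟩ := Finset.mem_image.1 (Finset.mem_coe.1 himage)
  exact (Finset.mem_filter.1 hD).2

theorem stmt15 (n : ℕ) (hmod : n % 9 = 1) (hn : 10 ≤ n) :
    ∃ (V : Type) (_ : Fintype V) (G : SimpleGraph V),
      Fintype.card V = n ∧ G.Connected ∧
      36 ^ ((n - 1) / 9) ≤ {S : Set V | IsMinCDS G S}.ncard := by
  obtain ⟨k, rfl⟩ : ∃ k, n = 9 * k + 1 := ⟨(n - 1) / 9, by omega⟩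
  have : NeZero k := ⟨by omega⟩
  have hcount : 36 ^ k ≤ {S | IsMinCDS (copiesWithHub gadget gadgetX (Fin k)) S}.ncard :=
    calc 36 ^ k ≤ {D | Minimal (IsLocalCDS gadget gadgetX) D}.ncard ^ Nat.card (Fin k) := by
          rw [Nat.card_fin]
          exact Nat.pow_le_pow_left le_ncard_minimal_isLocalCDS_gadget k
      _ ≤ _ := ncard_pow_le_ncard_isMinCDS gadget_isClique ⟨none, none_notMem_gadgetX⟩
  obtain ⟨S, hS⟩ := Set.nonempty_of_ncard_ne_zero ((by positivity : 0 < 36 ^ k).trans_le hcount).ne'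
  refine ⟨_, inferInstance, copiesWithHub gadget gadgetX (Fin k), ?_, hS.1.connected, ?_⟩
  · simp only [Fintype.card_option, Fintype.card_prod, Fintype.card_fin, Fintype.card_bool]
    ring
  · rwa [show (9 * k + 1 - 1) / 9 = k by omega]
end

section
/- The graph constructed in the 3-SAT reduction — with vertex set {s} ∪ {w_i, v_i, v̄_i, y_i, ȳ_i : 1 ≤ i ≤ n} ∪ {a_j, b_j, c_j : 1 ≤ j ≤ m} and edges {v_i s}, {v̄_i s}, {v_i v̄_i}, {v_i y_i}, {v̄_i ȳ_i}, {w_i y_i}, {w_i ȳ_i} for each i, plus {b_j a_j}, {a_j c_j} for each j, plus edges from b_j to the literal vertices of l_{j,1}, l_{j,2} and from a_j to the literal vertex of l_{j,3} — is 2-degenerate. -/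
/-- `G` is `d`-degenerate. -/
def Degenerate {V : Type*} (G : SimpleGraph V) (d : ℕ) : Prop :=
  ∀ A : Set V, A.Finite → A.Nonempty → ∃ a ∈ A, {b ∈ A | G.Adj a b}.ncard ≤ d

/-- Vertices of the graph built in the 3-SAT reduction:
`s`, and for each variable index `i` the vertices `w i, v i, vbar i, y i, ybar i`,
and for each clause index `j` the vertices `a j, b j, c j`. -/
inductive RVert (n m : ℕ) : Type
  | s : RVert n m
  | w : Fin n → RVert n m
  | v : Fin n → RVert n m
  | vbar : Fin n → RVert n m
  | y : Fin n → RVert n m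
  | ybar : Fin n → RVert n m
  | a : Fin m → RVert n m
  | b : Fin m → RVert n m
  | c : Fin m → RVert n m

/-- The literal vertex of the literal `(i, pol)`: `v i` if positive,
`vbar i` if negative. -/
def litVert {n m : ℕ} (lit : Fin n × Bool) : RVert n m :=
  if lit.2 then RVert.v lit.1 else RVert.vbar lit.1

/-- Base edge relation of the reduction graph for a 3-CNF formula whose
`j`-th clause consists of the literals `l j 0`, `l j 1`, `l j 2`. -/
def SatRel {n m : ℕ} (l : Fin m → Fin 3 → Fin n × Bool) :
    RVert n m → RVert n m → Prop := fun p q =>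
  (∃ i : Fin n, p = RVert.s ∧ (q = RVert.v i ∨ q = RVert.vbar i)) ∨
  (∃ i : Fin n, p = RVert.v i ∧ (q = RVert.vbar i ∨ q = RVert.y i)) ∨
  (∃ i : Fin n, p = RVert.vbar i ∧ q = RVert.ybar i) ∨
  (∃ i : Fin n, p = RVert.w i ∧ (q = RVert.y i ∨ q = RVert.ybar i)) ∨
  (∃ j : Fin m, p = RVert.b j ∧
    (q = RVert.a j ∨ q = litVert (l j 0) ∨ q = litVert (l j 1))) ∨
  (∃ j : Fin m, p = RVert.a j ∧ (q = RVert.c j ∨ q = litVert (l j 2)))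

/-- The graph constructed in the 3-SAT reduction. -/
def SatGraph {n m : ℕ} (l : Fin m → Fin 3 → Fin n × Bool) :
    SimpleGraph (RVert n m) :=
  SimpleGraph.fromRel (SatRel l)

section Aux

variable {n m : ℕ} {l : Fin m → Fin 3 → Fin n × Bool}

@[simp] lemma a_ne_lit (j : Fin m) (lit : Fin n × Bool) :
    (RVert.a j = (litVert lit : RVert n m)) ↔ False := by
  unfold litVert; split <;> simp

@[simp] lemma lit_ne_a (j : Fin m) (lit : Fin n × Bool) :
    ((litVert lit : RVert n m) = RVert.a j) ↔ False := by
  unfold litVert; split <;> simp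

@[simp] lemma b_ne_lit (j : Fin m) (lit : Fin n × Bool) :
    (RVert.b j = (litVert lit : RVert n m)) ↔ False := by
  unfold litVert; split <;> simp

@[simp] lemma lit_ne_b (j : Fin m) (lit : Fin n × Bool) :
    ((litVert lit : RVert n m) = RVert.b j) ↔ False := by
  unfold litVert; split <;> simp

lemma nbrY (i : Fin n) (q : RVert n m) (h : (SatGraph l).Adj (RVert.y i) q) :
    q = RVert.v i ∨ q = RVert.w i := by
  rw [SatGraph, SimpleGraph.fromRel_adj] at h
  rcases h.2 with h | h <;> simp only [SatRel, litVert] at h <;> aesop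

lemma nbrYbar (i : Fin n) (q : RVert n m) (h : (SatGraph l).Adj (RVert.ybar i) q) :
    q = RVert.vbar i ∨ q = RVert.w i := by
  rw [SatGraph, SimpleGraph.fromRel_adj] at h
  rcases h.2 with h | h <;> simp only [SatRel, litVert] at h <;> aesop

lemma nbrW (i : Fin n) (q : RVert n m) (h : (SatGraph l).Adj (RVert.w i) q) :
    q = RVert.y i ∨ q = RVert.ybar i := by
  rw [SatGraph, SimpleGraph.fromRel_adj] at h
  rcases h.2 with h | h <;> simp only [SatRel, litVert] at h <;> aesop

lemma nbrC (j : Fin m) (q : RVert n m) (h : (SatGraph l).Adj (RVert.c j) q) :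
    q = RVert.a j := by
  rw [SatGraph, SimpleGraph.fromRel_adj] at h
  rcases h.2 with h | h <;> simp only [SatRel, litVert] at h <;> aesop

lemma nbrA (j : Fin m) (q : RVert n m) (h : (SatGraph l).Adj (RVert.a j) q) :
    q = RVert.b j ∨ q = RVert.c j ∨ q = litVert (l j 2) := by
  rw [SatGraph, SimpleGraph.fromRel_adj] at h
  rcases h.2 with h | h <;> simp only [SatRel] at h <;> aesop

lemma nbrB (j : Fin m) (q : RVert n m) (h : (SatGraph l).Adj (RVert.b j) q) :
    q = RVert.a j ∨ q = litVert (l j 0) ∨ q = litVert (l j 1) := by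
  rw [SatGraph, SimpleGraph.fromRel_adj] at h
  rcases h.2 with h | h <;> simp only [SatRel] at h <;> aesop

lemma nbrV (i : Fin n) (q : RVert n m) (h : (SatGraph l).Adj (RVert.v i) q) :
    q = RVert.s ∨ q = RVert.vbar i ∨ q = RVert.y i ∨
      (∃ j, q = RVert.b j) ∨ (∃ j, q = RVert.a j) := by
  rw [SatGraph, SimpleGraph.fromRel_adj] at h
  rcases h.2 with h | h <;> simp only [SatRel] at h <;> aesop

lemma nbrVbar (i : Fin n) (q : RVert n m) (h : (SatGraph l).Adj (RVert.vbar i) q) :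
    q = RVert.s ∨ q = RVert.v i ∨ q = RVert.ybar i ∨
      (∃ j, q = RVert.b j) ∨ (∃ j, q = RVert.a j) := by
  rw [SatGraph, SimpleGraph.fromRel_adj] at h
  rcases h.2 with h | h <;> simp only [SatRel] at h <;> aesop

lemma nbrS (q : RVert n m) (h : (SatGraph l).Adj RVert.s q) :
    ∃ i, q = RVert.v i ∨ q = RVert.vbar i := by
  rw [SatGraph, SimpleGraph.fromRel_adj] at h
  rcases h.2 with h | h <;> simp only [SatRel, litVert] at h <;> aesop

lemma card2 {V : Type*} (S : Set V) (p q : V)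
    (h : ∀ x ∈ S, x = p ∨ x = q) : S.ncard ≤ 2 := by
  have hsub : S ⊆ {p, q} := by
    intro x hx; rcases h x hx with rfl | rfl <;> simp
  calc S.ncard ≤ ({p, q} : Set V).ncard :=
        Set.ncard_le_ncard hsub (Set.toFinite _)
    _ ≤ 2 := le_trans (Set.ncard_insert_le p {q}) (by simp)

end Aux

theorem stmt17 (n m : ℕ) (l : Fin m → Fin 3 → Fin n × Bool) :
    Degenerate (SatGraph l) 2 := by
  intro A hA hne
  by_cases hy : ∃ i, RVert.y i ∈ A
  · obtain ⟨i, hi⟩ := hy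
    exact ⟨_, hi, card2 _ _ _ fun x hx => nbrY i x hx.2⟩
  by_cases hyb : ∃ i, RVert.ybar i ∈ A
  · obtain ⟨i, hi⟩ := hyb
    exact ⟨_, hi, card2 _ _ _ fun x hx => nbrYbar i x hx.2⟩
  by_cases hw : ∃ i, RVert.w i ∈ A
  · obtain ⟨i, hi⟩ := hw
    exact ⟨_, hi, card2 _ _ _ fun x hx => nbrW i x hx.2⟩
  by_cases hc : ∃ j, RVert.c j ∈ A
  · obtain ⟨j, hj⟩ := hc
    exact ⟨_, hj, card2 _ (RVert.a j) (RVert.a j) fun x hx => Or.inl (nbrC j x hx.2)⟩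
  by_cases ha : ∃ j, RVert.a j ∈ A
  · obtain ⟨j, hj⟩ := ha
    refine ⟨_, hj, card2 _ (RVert.b j) (litVert (l j 2)) fun x hx => ?_⟩
    rcases nbrA j x hx.2 with h | h | h
    · exact Or.inl h
    · exact absurd hx.1 (by rw [h]; exact fun hh => hc ⟨j, hh⟩)
    · exact Or.inr h
  by_cases hb : ∃ j, RVert.b j ∈ A
  · obtain ⟨j, hj⟩ := hb
    refine ⟨_, hj, card2 _ (litVert (l j 0)) (litVert (l j 1)) fun x hx => ?_⟩
    rcases nbrB j x hx.2 with h | h | h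
    · exact absurd hx.1 (by rw [h]; exact fun hh => ha ⟨j, hh⟩)
    · exact Or.inl h
    · exact Or.inr h
  by_cases hv : ∃ i, RVert.v i ∈ A
  · obtain ⟨i, hi⟩ := hv
    refine ⟨_, hi, card2 _ RVert.s (RVert.vbar i) fun x hx => ?_⟩
    rcases nbrV i x hx.2 with h | h | h | ⟨j, h⟩ | ⟨j, h⟩
    · exact Or.inl h
    · exact Or.inr h
    · exact absurd hx.1 (by rw [h]; exact fun hh => hy ⟨i, hh⟩)
    · exact absurd hx.1 (by rw [h]; exact fun hh => hb ⟨j, hh⟩)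
    · exact absurd hx.1 (by rw [h]; exact fun hh => ha ⟨j, hh⟩)
  by_cases hvb : ∃ i, RVert.vbar i ∈ A
  · obtain ⟨i, hi⟩ := hvb
    refine ⟨_, hi, card2 _ RVert.s (RVert.v i) fun x hx => ?_⟩
    rcases nbrVbar i x hx.2 with h | h | h | ⟨j, h⟩ | ⟨j, h⟩
    · exact Or.inl h
    · exact Or.inr h
    · exact absurd hx.1 (by rw [h]; exact fun hh => hyb ⟨i, hh⟩)
    · exact absurd hx.1 (by rw [h]; exact fun hh => hb ⟨j, hh⟩)
    · exact absurd hx.1 (by rw [h]; exact fun hh => ha ⟨j, hh⟩)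
  obtain ⟨x, hx⟩ := hne
  cases x with
  | s =>
    refine ⟨RVert.s, hx, ?_⟩
    have hempty : {b ∈ A | (SatGraph l).Adj RVert.s b} = ∅ := by
      ext q
      simp only [Set.mem_setOf_eq, Set.mem_empty_iff_false, iff_false, not_and]
      intro hqA hadj
      obtain ⟨i, h | h⟩ := nbrS q hadj
      · exact hv ⟨i, h ▸ hqA⟩
      · exact hvb ⟨i, h ▸ hqA⟩
    rw [hempty]; simp
  | w i => exact absurd ⟨i, hx⟩ hw
  | v i => exact absurd ⟨i, hx⟩ hv
  | vbar i => exact absurd ⟨i, hx⟩ hvb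
  | y i => exact absurd ⟨i, hx⟩ hy
  | ybar i => exact absurd ⟨i, hx⟩ hyb
  | a j => exact absurd ⟨j, hx⟩ ha
  | b j => exact absurd ⟨j, hx⟩ hb
  | c j => exact absurd ⟨j, hx⟩ hc
end
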